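/- arXiv:2011.11282 — 3 statements merged into one kernel-verified Lean document; each statement's English description precedes it below -/
import Mathlib

section
/- Let G be a graph with vertex cover V_k of size k, and let M(G, V_k) be the graph obtained from G by adding, for each nonempty subset X ⊆ V_k, a new vertex M_X adjacent exactly to the vertices of X. Then for every potential maximal clique Ω of M(G, V_k), the set V_k intersects at most three distinct connected components of M(G, V_k) \ Ω. -/
/-- The graph `H` with vertices of `Ω` made isolated (edges within `V \ Ω`). -/
def restrict {V : Type*} (H : SimpleGraph V) (Ω : Set V) : SimpleGraph V where
  Adj a b := H.Adj a b ∧ a ∉ Ω ∧ b ∉ Ω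
  symm := ⟨fun _ _ ⟨h, ha, hb⟩ => ⟨h.symm, hb, ha⟩⟩
  loopless := ⟨fun a h => H.irrefl h.1⟩

/-- `C` is the vertex set of a connected component of `H \ Ω`. -/
def IsCompOf {V : Type*} (H : SimpleGraph V) (Ω C : Set V) : Prop :=
  ∃ a, a ∉ Ω ∧ C = {b | b ∉ Ω ∧ (restrict H Ω).Reachable a b}

/-- Neighborhood of a vertex set: vertices outside `C` adjacent to some vertex of `C`. -/
def nbhd {V : Type*} (H : SimpleGraph V) (C : Set V) : Set V :=
  {w | w ∉ C ∧ ∃ c ∈ C, H.Adj w c}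

/-- `Ω` is a potential maximal clique of `H`. -/
def IsPMC {V : Type*} (H : SimpleGraph V) (Ω : Set V) : Prop :=
  (∀ C, IsCompOf H Ω C → nbhd H C ≠ Ω) ∧
  (∀ u ∈ Ω, ∀ v ∈ Ω, u ≠ v →
    H.Adj u v ∨ ∃ C, IsCompOf H Ω C ∧ u ∈ nbhd H C ∧ v ∈ nbhd H C)

/-- A PMC is free if every vertex of `Ω` has a neighbor outside `Ω`. -/
def IsFree {V : Type*} (H : SimpleGraph V) (Ω : Set V) : Prop :=
  ∀ v ∈ Ω, ∃ w, w ∉ Ω ∧ H.Adj v w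

/-- `G` together with a vertex `M_X` for each nonempty `X ⊆ Vk`, adjacent exactly to `X`. -/
def Mgraph {V : Type*} (G : SimpleGraph V) (Vk : Set V) :
    SimpleGraph (V ⊕ {X : Set V // X ⊆ Vk ∧ X.Nonempty}) where
  Adj a b := match a, b with
    | .inl u, .inl w => G.Adj u w
    | .inl u, .inr X => u ∈ X.val
    | .inr X, .inl u => u ∈ X.val
    | .inr _, .inr _ => False
  symm := ⟨by rintro (u|X) (w|Y) h <;> simp_all <;> exact h.symm⟩
  loopless := ⟨by rintro (u|X) h <;> simp_all⟩

/-
If four distinct components `C₁, …, C₄` of `M(G, V_k) \ Ω` contain vertices `v₁, …, v₄` of `V_k`,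
then `M_{v₁,v₂} ∈ Ω`: otherwise this vertex would join `C₁` and `C₂`. Likewise `M_{v₃,v₄} ∈ Ω`.
These two vertices are non-adjacent, and distinct unless `v₃` already lies in `C₁` or `C₂`;
so the PMC condition asks for a component whose neighbourhood contains both. But a component next to `M_{v₁,v₂}` contains `v₁` or `v₂`,
so it is `C₁` or `C₂`, while one next to `M_{v₃,v₄}` is `C₃` or `C₄`.
-/

namespace IsCompOf

variable {W : Type*} {H : SimpleGraph W} {Ω C C' : Set W} {x y : W}

lemma eq_setOf_reachable (hC : IsCompOf H Ω C) (hx : x ∈ C) :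
    C = {b | b ∉ Ω ∧ (restrict H Ω).Reachable x b} := by
  obtain ⟨a, -, rfl⟩ := hC
  obtain ⟨-, hax⟩ := hx
  ext b
  exact ⟨fun ⟨hb, hab⟩ => ⟨hb, hax.symm.trans hab⟩, fun ⟨hb, hxb⟩ => ⟨hb, hax.trans hxb⟩⟩

lemma eq_of_mem_of_mem (hC : IsCompOf H Ω C) (hC' : IsCompOf H Ω C')
    (hx : x ∈ C) (hx' : x ∈ C') : C = C' :=
  (hC.eq_setOf_reachable hx).trans (hC'.eq_setOf_reachable hx').symm

lemma notMem_of_mem (hC : IsCompOf H Ω C) (hx : x ∈ C) : x ∉ Ω := by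
  obtain ⟨a, -, rfl⟩ := hC
  exact hx.1

lemma mem_of_adj (hC : IsCompOf H Ω C) (hx : x ∈ C) (hy : y ∉ Ω) (hxy : H.Adj x y) : y ∈ C := by
  rw [hC.eq_setOf_reachable hx]
  exact ⟨hy, SimpleGraph.Adj.reachable ⟨hxy, hC.notMem_of_mem hx, hy⟩⟩

lemma eq_of_adj_of_adj (hC : IsCompOf H Ω C) (hC' : IsCompOf H Ω C') (hy : y ∉ Ω)
    {x x' : W} (hx : x ∈ C) (hx' : x' ∈ C') (hxy : H.Adj x y) (hx'y : H.Adj x' y) : C = C' :=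
  hC.eq_of_mem_of_mem hC' (hC.mem_of_adj hx hy hxy) (hC'.mem_of_adj hx' hy hx'y)

end IsCompOf

section Mgraph

variable {V : Type*} {G : SimpleGraph V} {Vk : Set V}

lemma mgraph_adj_inr_inl {X : {X : Set V // X ⊆ Vk ∧ X.Nonempty}} {u : V} :
    (Mgraph G Vk).Adj (.inr X) (.inl u) ↔ u ∈ X.val :=
  Iff.rfl

lemma mgraph_not_adj_inr_inr {X Y : {X : Set V // X ⊆ Vk ∧ X.Nonempty}} :
    ¬(Mgraph G Vk).Adj (.inr X) (.inr Y) :=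
  id

/-- The index `{u, v}` of the added vertex `M_{u,v}`. -/
def pairIndex {u v : V} (hu : u ∈ Vk) (hv : v ∈ Vk) : {X : Set V // X ⊆ Vk ∧ X.Nonempty} :=
  ⟨{u, v}, Set.insert_subset hu (Set.singleton_subset_iff.2 hv), Set.insert_nonempty u {v}⟩

variable {Ω C₁ C₂ C : Set (V ⊕ {X : Set V // X ⊆ Vk ∧ X.Nonempty})} {u v : V}

lemma inr_pairIndex_mem_of_ne (hu : u ∈ Vk) (hv : v ∈ Vk) (hC₁ : IsCompOf (Mgraph G Vk) Ω C₁)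
    (hC₂ : IsCompOf (Mgraph G Vk) Ω C₂) (hne : C₁ ≠ C₂)
    (hu₁ : .inl u ∈ C₁) (hv₂ : .inl v ∈ C₂) : .inr (pairIndex hu hv) ∈ Ω := by
  by_contra hM
  exact hne (hC₁.eq_of_adj_of_adj hC₂ hM hu₁ hv₂
    (mgraph_adj_inr_inl.2 (Set.mem_insert u {v})).symm
    (mgraph_adj_inr_inl.2 (Set.mem_insert_of_mem u rfl)).symm)

lemma eq_or_eq_of_adj_inr_pairIndex (hu : u ∈ Vk) (hv : v ∈ Vk) (hC₁ : IsCompOf (Mgraph G Vk) Ω C₁)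
    (hC₂ : IsCompOf (Mgraph G Vk) Ω C₂) (hC : IsCompOf (Mgraph G Vk) Ω C)
    (hu₁ : .inl u ∈ C₁) (hv₂ : .inl v ∈ C₂) {c : V ⊕ {X : Set V // X ⊆ Vk ∧ X.Nonempty}}
    (hc : c ∈ C) (hadj : (Mgraph G Vk).Adj (.inr (pairIndex hu hv)) c) : C = C₁ ∨ C = C₂ := by
  obtain w | X := c
  · rcases mgraph_adj_inr_inl.1 hadj with rfl | rfl
    · exact .inl (hC.eq_of_mem_of_mem hC₁ hc hu₁)
    · exact .inr (hC.eq_of_mem_of_mem hC₂ hc hv₂)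
  · exact absurd hadj mgraph_not_adj_inr_inr

lemma IsPMC.mgraph_comp_pairs_meet (hΩ : IsPMC (Mgraph G Vk) Ω)
    {C₃ C₄ : Set (V ⊕ {X : Set V // X ⊆ Vk ∧ X.Nonempty})} {w x : V} (hu : u ∈ Vk) (hv : v ∈ Vk) (hw : w ∈ Vk) (hx : x ∈ Vk)
    (hC₁ : IsCompOf (Mgraph G Vk) Ω C₁) (hC₂ : IsCompOf (Mgraph G Vk) Ω C₂)
    (hC₃ : IsCompOf (Mgraph G Vk) Ω C₃) (hC₄ : IsCompOf (Mgraph G Vk) Ω C₄)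
    (h₁₂ : C₁ ≠ C₂) (h₃₄ : C₃ ≠ C₄) (hu₁ : .inl u ∈ C₁) (hv₂ : .inl v ∈ C₂)
    (hw₃ : .inl w ∈ C₃) (hx₄ : .inl x ∈ C₄) :
    C₃ = C₁ ∨ C₃ = C₂ ∨ C₄ = C₁ ∨ C₄ = C₂ := by
  have hM₁₂ := inr_pairIndex_mem_of_ne hu hv hC₁ hC₂ h₁₂ hu₁ hv₂
  have hM₃₄ := inr_pairIndex_mem_of_ne hw hx hC₃ hC₄ h₃₄ hw₃ hx₄
  by_cases heq : (Sum.inr (pairIndex hu hv) : V ⊕ _) = .inr (pairIndex hw hx)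
  · have hadj : (Mgraph G Vk).Adj (.inr (pairIndex hu hv)) (.inl w) :=
      heq ▸ mgraph_adj_inr_inl.2 (Set.mem_insert w {x})
    have := eq_or_eq_of_adj_inr_pairIndex hu hv hC₁ hC₂ hC₃ hu₁ hv₂ hw₃ hadj
    tauto
  rcases hΩ.2 _ hM₁₂ _ hM₃₄ heq with hadj | ⟨C, hC, ⟨-, c, hc, hc₁₂⟩, ⟨-, d, hd, hd₃₄⟩⟩
  · exact absurd hadj mgraph_not_adj_inr_inr
  · rcases eq_or_eq_of_adj_inr_pairIndex hu hv hC₁ hC₂ hC hu₁ hv₂ hc hc₁₂ with rfl | rfl <;>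
    rcases eq_or_eq_of_adj_inr_pairIndex hw hx hC₃ hC₄ hC hw₃ hx₄ hd hd₃₄ with h | h <;>
    simp only [h, true_or, or_true]

end Mgraph

theorem stmt2_general {V : Type*} (G : SimpleGraph V) (Vk : Set V)
    (Ω : Set (V ⊕ {X : Set V // X ⊆ Vk ∧ X.Nonempty}))
    (hΩ : IsPMC (Mgraph G Vk) Ω) :
    {C | IsCompOf (Mgraph G Vk) Ω C ∧ ∃ v ∈ Vk, Sum.inl v ∈ C}.ncard ≤ 3 := by
  by_contra! h
  obtain ⟨C₁, ⟨hC₁, v₁, hv₁, h₁⟩, C₂, ⟨hC₂, v₂, hv₂, h₂⟩, C₃, ⟨hC₃, v₃, hv₃, h₃⟩,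
      C₄, ⟨hC₄, v₄, hv₄, h₄⟩, h₁₂, h₁₃, h₁₄, h₂₃, h₂₄, h₃₄⟩ :=
    (Set.three_lt_ncard (Set.finite_of_ncard_pos (by omega))).1 h
  rcases hΩ.mgraph_comp_pairs_meet hv₁ hv₂ hv₃ hv₄ hC₁ hC₂ hC₃ hC₄ h₁₂ h₃₄ h₁ h₂ h₃ h₄ with
    h | h | h | h
  exacts [h₁₃ h.symm, h₂₃ h.symm, h₁₄ h.symm, h₂₄ h.symm]

theorem stmt2 {V : Type*} [Fintype V] (G : SimpleGraph V) (Vk : Set V) (k : ℕ)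
    (hcard : Vk.ncard = k)
    (hvc : ∀ a b, G.Adj a b → a ∈ Vk ∨ b ∈ Vk)
    (Ω : Set (V ⊕ {X : Set V // X ⊆ Vk ∧ X.Nonempty}))
    (hΩ : IsPMC (Mgraph G Vk) Ω) :
    {C | IsCompOf (Mgraph G Vk) Ω C ∧ ∃ v ∈ Vk, Sum.inl v ∈ C}.ncard ≤ 3 :=
  stmt2_general G Vk Ω hΩ
end

section
/- Define the graph G_k with vertex set [k] ∪ C([k],2), where C([k],2) is the set of 2-element subsets of [k] = {1,…,k}, and edges connecting each pair-vertex {i,j} to the vertices i and j. For every partition of [k] into three nonempty parts P_1, P_2, P_3, the set Ω consisting of all pair-vertices {i,j} with i and j in different parts is a potential maximal clique of G_k. -/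
/-- Vertices of `G_k`: `[k]` together with the 2-element subsets of `[k]`. -/
abbrev GkV (k : ℕ) := Fin k ⊕ {S : Finset (Fin k) // S.card = 2}

/-- The incidence graph of 2-element subsets of `[k]` over `[k]`. -/
def Gk (k : ℕ) : SimpleGraph (GkV k) where
  Adj a b := match a, b with
    | .inl i, .inr S => i ∈ S.val
    | .inr S, .inl i => i ∈ S.val
    | _, _ => False
  symm := ⟨by rintro (i|S) (j|T) h <;> simp_all⟩
  loopless := ⟨by rintro (i|S) h <;> simp_all⟩

/-- `{P1, P2, P3}` is a partition of `[k]` into three nonempty parts. -/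
def IsTripartition {k : ℕ} (P1 P2 P3 : Set (Fin k)) : Prop :=
  P1.Nonempty ∧ P2.Nonempty ∧ P3.Nonempty ∧
  Disjoint P1 P2 ∧ Disjoint P1 P3 ∧ Disjoint P2 P3 ∧ P1 ∪ P2 ∪ P3 = Set.univ

/-- The set of pair-vertices `{i, j}` with `i` and `j` in different parts of `{P1, P2, P3}`. -/
def Omega3 {k : ℕ} (P1 P2 P3 : Set (Fin k)) : Set (GkV k) :=
  {x | ∃ S : {S : Finset (Fin k) // S.card = 2}, x = Sum.inr S ∧
    ∃ i ∈ S.val, ∃ j ∈ S.val, i ≠ j ∧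
      ¬((i ∈ P1 ∧ j ∈ P1) ∨ (i ∈ P2 ∧ j ∈ P2) ∨ (i ∈ P3 ∧ j ∈ P3))}

/-!
Colour `[k]` by the part containing each element. Removing `Ω` (the pair-vertices joining two
colours) leaves exactly three components, one per colour `t`: the elements of colour `t` together
with the pairs inside that colour class. The neighbourhood of the component of colour `t` consists
of the pairs with exactly one end of colour `t`, so it misses the pairs joining the other two
colours; and any two pairs of `Ω` each meet two of the three colours, hence share a colour `t`, and
both lie in the neighbourhood of the component of colour `t`.
-/

open SimpleGraph

theorem setOf_reachable_restrict_eq {V : Type*} {H : SimpleGraph V} {Ω D : Set V}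
    (hDΩ : Disjoint D Ω) (hclosed : ∀ ⦃x y⦄, x ∈ D → (restrict H Ω).Adj x y → y ∈ D)
    (hconn : ∀ x ∈ D, ∀ y ∈ D, (restrict H Ω).Reachable x y) {a : V} (ha : a ∈ D) :
    {b | b ∉ Ω ∧ (restrict H Ω).Reachable a b} = D := by
  have walk_mem : ∀ {x y}, (restrict H Ω).Walk x y → x ∈ D → y ∈ D := by
    intro x y w hx
    induction w with
    | nil => exact hx
    | cons h _ ih => exact ih (hclosed hx h)
  ext b
  exact ⟨fun ⟨_, ⟨w⟩⟩ => walk_mem w ha, fun hb => ⟨hDΩ.notMem_of_mem_left hb, hconn a ha b hb⟩⟩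

namespace Gk

variable {k : ℕ} {β : Type*} {c : Fin k → β} {b : β} {i j : Fin k}
  {S : {S : Finset (Fin k) // S.card = 2}}

def pairVertex (h : i ≠ j) : GkV k := .inr ⟨{i, j}, Finset.card_pair h⟩

def crossPairs (c : Fin k → β) : Set (GkV k) :=
  {x | x.elim (fun _ => False) (fun S => ∃ i ∈ S.1, ∃ j ∈ S.1, c i ≠ c j)}

def colorClass (c : Fin k → β) (b : β) : Set (GkV k) :=
  {x | x.elim (fun i => c i = b) (fun S => ∀ i ∈ S.1, c i = b)}

@[simp] theorem inl_notMem_crossPairs : .inl i ∉ crossPairs c := id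

@[simp] theorem inr_mem_crossPairs :
    .inr S ∈ crossPairs c ↔ ∃ i ∈ S.1, ∃ j ∈ S.1, c i ≠ c j := Iff.rfl

@[simp] theorem inr_mem_colorClass : .inr S ∈ colorClass c b ↔ ∀ i ∈ S.1, c i = b := Iff.rfl

theorem disjoint_colorClass_crossPairs : Disjoint (colorClass c b) (crossPairs c) := by
  refine Set.disjoint_left.2 fun x hx hcross => ?_
  rcases x with i | S
  · exact hcross
  · obtain ⟨i, hi, j, hj, hij⟩ := hcross
    exact hij ((hx i hi).trans (hx j hj).symm)

theorem mem_colorClass_of_restrict_adj {x y : GkV k} (hx : x ∈ colorClass c b)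
    (h : (restrict (Gk k) (crossPairs c)).Adj x y) : y ∈ colorClass c b := by
  obtain ⟨hadj, -, hy⟩ := h
  rcases x with i | S <;> rcases y with j | T
  · exact hadj.elim
  · intro j hj
    by_contra hne
    exact hy ⟨i, hadj, j, hj, fun h => hne (h.symm.trans hx)⟩
  · exact hx j hadj
  · exact hadj.elim

theorem reachable_inl_inl (hij : c i = c j) :
    (restrict (Gk k) (crossPairs c)).Reachable (.inl i) (.inl j) := by
  by_cases h : i = j
  · exact h ▸ .rfl
  have hS : pairVertex h ∉ crossPairs c :=
    (disjoint_colorClass_crossPairs (b := c i)).notMem_of_mem_left (by simp [pairVertex, hij])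
  have h₁ : (restrict (Gk k) (crossPairs c)).Adj (.inl i) (pairVertex h) :=
    ⟨Finset.mem_insert_self i {j}, inl_notMem_crossPairs, hS⟩
  have h₂ : (restrict (Gk k) (crossPairs c)).Adj (pairVertex h) (.inl j) :=
    ⟨Finset.mem_insert_of_mem (Finset.mem_singleton_self j), hS, inl_notMem_crossPairs⟩
  exact h₁.reachable.trans h₂.reachable

theorem exists_reachable_inl_of_mem_colorClass {x : GkV k} (hx : x ∈ colorClass c b) :
    ∃ i, c i = b ∧ (restrict (Gk k) (crossPairs c)).Reachable (.inl i) x := by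
  rcases x with i | S
  · exact ⟨i, hx, .rfl⟩
  · obtain ⟨i, hi⟩ : S.1.Nonempty := Finset.card_pos.1 (by omega)
    have hS : Sum.inr S ∉ crossPairs c := disjoint_colorClass_crossPairs.notMem_of_mem_left hx
    exact ⟨i, hx i hi, Adj.reachable ⟨hi, inl_notMem_crossPairs, hS⟩⟩

theorem reachable_of_mem_colorClass {x y : GkV k} (hx : x ∈ colorClass c b)
    (hy : y ∈ colorClass c b) : (restrict (Gk k) (crossPairs c)).Reachable x y := by
  obtain ⟨i, hi, hix⟩ := exists_reachable_inl_of_mem_colorClass hx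
  obtain ⟨j, hj, hjy⟩ := exists_reachable_inl_of_mem_colorClass hy
  exact hix.symm.trans ((reachable_inl_inl (hi.trans hj.symm)).trans hjy)

theorem setOf_reachable_eq_colorClass {a : GkV k} (ha : a ∈ colorClass c b) :
    {x | x ∉ crossPairs c ∧ (restrict (Gk k) (crossPairs c)).Reachable a x} = colorClass c b :=
  setOf_reachable_restrict_eq disjoint_colorClass_crossPairs
    (fun _ _ => mem_colorClass_of_restrict_adj)
    (fun _ hx _ hy => reachable_of_mem_colorClass hx hy) ha

theorem exists_mem_colorClass_of_notMem_crossPairs {x : GkV k} (hx : x ∉ crossPairs c) :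
    ∃ i, x ∈ colorClass c (c i) := by
  rcases x with i | S
  · exact ⟨i, rfl⟩
  · obtain ⟨i, hi⟩ : S.1.Nonempty := Finset.card_pos.1 (by omega)
    refine ⟨i, fun j hj => ?_⟩
    by_contra hne
    exact hx ⟨j, hj, i, hi, hne⟩

theorem isCompOf_crossPairs_iff {C : Set (GkV k)} :
    IsCompOf (Gk k) (crossPairs c) C ↔ ∃ i, C = colorClass c (c i) := by
  constructor
  · rintro ⟨a, ha, rfl⟩
    obtain ⟨i, hi⟩ := exists_mem_colorClass_of_notMem_crossPairs ha
    exact ⟨i, setOf_reachable_eq_colorClass hi⟩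
  · rintro ⟨i, rfl⟩
    exact ⟨.inl i, inl_notMem_crossPairs, (setOf_reachable_eq_colorClass rfl).symm⟩

theorem inr_mem_nbhd_colorClass :
    .inr S ∈ nbhd (Gk k) (colorClass c b) ↔ (∃ i ∈ S.1, c i = b) ∧ ∃ j ∈ S.1, c j ≠ b := by
  simp only [nbhd, Set.mem_ofPred_eq, inr_mem_colorClass, not_forall, exists_prop]
  constructor
  · rintro ⟨hout, x, hx, hadj⟩
    rcases x with i | T
    · exact ⟨⟨i, hadj, hx⟩, hout⟩
    · exact hadj.elim
  · rintro ⟨⟨i, hi, hib⟩, hout⟩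
    exact ⟨hout, .inl i, hib, hi⟩

theorem inr_mem_nbhd_colorClass_of_mem_crossPairs (hS : .inr S ∈ crossPairs c) (hi : i ∈ S.1) :
    .inr S ∈ nbhd (Gk k) (colorClass c (c i)) := by
  obtain ⟨j, hj, j', hj', hjj'⟩ := hS
  refine inr_mem_nbhd_colorClass.2 ⟨⟨i, hi, rfl⟩, ?_⟩
  by_cases hji : c j = c i
  · exact ⟨j', hj', fun h => hjj' (hji.trans h.symm)⟩
  · exact ⟨j, hj, hji⟩

variable {c : Fin k → Fin 3} {T : {S : Finset (Fin k) // S.card = 2}}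

theorem exists_color_eq_of_mem_crossPairs (hS : .inr S ∈ crossPairs c)
    (hT : .inr T ∈ crossPairs c) : ∃ i ∈ S.1, ∃ j ∈ T.1, c i = c j := by
  obtain ⟨i, hi, i', hi', hii'⟩ := hS
  obtain ⟨j, hj, j', hj', hjj'⟩ := hT
  -- two 2-element subsets of a 3-element set intersect
  have key : ∀ a a' b b' : Fin 3, a ≠ a' → b ≠ b' → a = b ∨ a = b' ∨ a' = b ∨ a' = b' := by
    decide
  rcases key _ _ _ _ hii' hjj' with h | h | h | h
  exacts [⟨i, hi, j, hj, h⟩, ⟨i, hi, j', hj', h⟩, ⟨i', hi', j, hj, h⟩, ⟨i', hi', j', hj', h⟩]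

theorem isPMC_crossPairs (hc : Function.Surjective c) : IsPMC (Gk k) (crossPairs c) := by
  refine ⟨fun C hC hN => ?_, fun u hu v hv _ => Or.inr ?_⟩
  · obtain ⟨i, rfl⟩ := isCompOf_crossPairs_iff.1 hC
    obtain ⟨s, r, hsi, hri, hsr⟩ :=
      (by decide : ∀ t : Fin 3, ∃ s r : Fin 3, s ≠ t ∧ r ≠ t ∧ s ≠ r) (c i)
    obtain ⟨q, rfl⟩ := hc s
    obtain ⟨w, rfl⟩ := hc r
    have hqw : q ≠ w := fun h => hsr (congrArg c h)
    have hmem : pairVertex hqw ∈ crossPairs c := ⟨q, by simp, w, by simp, hsr⟩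
    rw [← hN, pairVertex, inr_mem_nbhd_colorClass] at hmem
    obtain ⟨⟨m, hm, hmi⟩, -⟩ := hmem
    rcases Finset.mem_insert.1 hm with rfl | hm
    · exact hsi hmi
    · exact hri (Finset.mem_singleton.1 hm ▸ hmi)
  · rcases u with _ | S
    · exact hu.elim
    rcases v with _ | T
    · exact hv.elim
    obtain ⟨i, hi, j, hj, hij⟩ := exists_color_eq_of_mem_crossPairs hu hv
    refine ⟨colorClass c (c i), isCompOf_crossPairs_iff.2 ⟨i, rfl⟩,
      inr_mem_nbhd_colorClass_of_mem_crossPairs hu hi, ?_⟩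
    exact hij ▸ inr_mem_nbhd_colorClass_of_mem_crossPairs hv hj

end Gk

open Classical in
noncomputable def partIndex {k : ℕ} (P1 P2 : Set (Fin k)) (i : Fin k) : Fin 3 :=
  if i ∈ P1 then 0 else if i ∈ P2 then 1 else 2

namespace IsTripartition

variable {k : ℕ} {P1 P2 P3 : Set (Fin k)}

theorem partIndex_eq_iff (h : IsTripartition P1 P2 P3) {i j : Fin k} :
    partIndex P1 P2 i = partIndex P1 P2 j ↔
      (i ∈ P1 ∧ j ∈ P1) ∨ (i ∈ P2 ∧ j ∈ P2) ∨ (i ∈ P3 ∧ j ∈ P3) := by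
  obtain ⟨-, -, -, h12, h13, h23, hcover⟩ := h
  have hmem : ∀ x, x ∈ P1 ∨ x ∈ P2 ∨ x ∈ P3 := fun x => by
    simpa [or_assoc] using Set.eq_univ_iff_forall.1 hcover x
  rw [Set.disjoint_left] at h12 h13 h23
  have := hmem i
  have := hmem j
  unfold partIndex
  split_ifs <;> grind

theorem partIndex_surjective (h : IsTripartition P1 P2 P3) :
    Function.Surjective (partIndex P1 P2) := by
  obtain ⟨⟨p, hp⟩, ⟨q, hq⟩, ⟨r, hr⟩, h12, h13, h23, -⟩ := h
  rw [Set.disjoint_left] at h12 h13 h23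
  intro t
  fin_cases t
  · exact ⟨p, by simp [partIndex, hp]⟩
  · have hq1 : q ∉ P1 := fun h => h12 h hq
    exact ⟨q, by simp [partIndex, hq, hq1]⟩
  · have hr1 : r ∉ P1 := fun h => h13 h hr
    have hr2 : r ∉ P2 := fun h => h23 h hr
    exact ⟨r, by simp [partIndex, hr1, hr2]⟩

theorem omega3_eq_crossPairs (h : IsTripartition P1 P2 P3) :
    Omega3 P1 P2 P3 = Gk.crossPairs (partIndex P1 P2) := by
  ext (i | S)
  · simp [Omega3]
  · simp only [Omega3, Set.mem_ofPred_eq, Sum.inr.injEq, exists_eq_left', Gk.inr_mem_crossPairs,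
      ← h.partIndex_eq_iff]
    constructor
    · rintro ⟨i, hi, j, hj, -, hij⟩
      exact ⟨i, hi, j, hj, hij⟩
    · rintro ⟨i, hi, j, hj, hij⟩
      exact ⟨i, hi, j, hj, fun h => hij (congrArg _ h), hij⟩

end IsTripartition

theorem stmt5 (k : ℕ) (P1 P2 P3 : Set (Fin k)) (hpart : IsTripartition P1 P2 P3) :
    IsPMC (Gk k) (Omega3 P1 P2 P3) := by
  rw [hpart.omega3_eq_crossPairs]
  exact Gk.isPMC_crossPairs hpart.partIndex_surjective
end

section
/- The number of potential maximal cliques of the graph G_k is Ω(4^k); more precisely, it is at least 3^{-3} · Σ_{i=0}^{k−3} C(k,i) · 3^{k−i}, and hence at least c · 4^k for some constant c > 0 and all sufficiently large k. -/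
/-!
For `A ⊆ [k]` and a colouring `f` of `[k] \ A` using all three colours, the set `Ω` made of `A`
and of the pairs `{x, y} ⊆ [k] \ A` with `f x ≠ f y` is a PMC of `G_k`. Away from isolated pairs
inside `A`, the components of `G_k \ Ω` are the three colour classes (each with its monochromatic
pairs); a pair of `Ω` borders the classes of both its colours, a vertex of `A` borders all three,
and two 2-subsets of a 3-set always meet. No component sees all of `Ω`, since some bichromatic
pair avoids its colour. `Ω` determines `A` and the partition into colour classes, so fixing the
colours of three vertices outside `A` yields `3 ^ (k - |A| - 3)` distinct PMCs. Finally, the three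
binomial terms missing from the sum are dominated by its first three, so the sum is at least
`4 ^ k / 2`.
-/

open Finset

lemma card_filter_forall_mem_eq {α β : Type*} [Fintype α] [DecidableEq α] [Fintype β]
    (T : Finset α) (g : α → β) [DecidablePred fun f : α → β => ∀ x ∈ T, f x = g x] :
    #{f : α → β | ∀ x ∈ T, f x = g x} = Fintype.card β ^ (Fintype.card α - #T) := by
  have : ({f : α → β | ∀ x ∈ T, f x = g x} : Finset _) =
      Fintype.piFinset fun x => if x ∈ T then {g x} else univ := by
    ext f
    simp only [mem_filter, mem_univ, true_and, Fintype.mem_piFinset]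
    refine forall_congr' fun x => ?_
    split_ifs <;> simp_all
  rw [this, Fintype.card_piFinset]
  simp only [apply_ite card, card_singleton, card_univ]
  rw [prod_ite, prod_const_one, one_mul, prod_const, filter_not, filter_mem_eq_inter,
    univ_inter, card_univ_sdiff]

namespace Gk

variable {k : ℕ} {A : Finset (Fin k)} {f g : Fin k → Fin 3} {c : Fin 3} {x y : Fin k}

def pair (x y : Fin k) (h : x ≠ y) : GkV k := .inr ⟨{x, y}, card_pair h⟩

lemma adj_inl_pair_left (h : x ≠ y) : (Gk k).Adj (.inl x) (pair x y h) := by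
  simp [Gk, pair]

lemma adj_inl_pair_right (h : x ≠ y) : (Gk k).Adj (.inl y) (pair x y h) := by
  simp [Gk, pair]

def colourPMC (A : Finset (Fin k)) (f : Fin k → Fin 3) : Set (GkV k) := fun v =>
  match v with
  | .inl a => a ∈ A
  | .inr S => ∃ x ∈ S.1, ∃ y ∈ S.1, x ∉ A ∧ y ∉ A ∧ f x ≠ f y

lemma pair_mem_colourPMC_iff (h : x ≠ y) :
    pair x y h ∈ colourPMC A f ↔ x ∉ A ∧ y ∉ A ∧ f x ≠ f y := by
  refine ⟨?_, fun ⟨hx, hy, hf⟩ => ⟨x, by simp, y, by simp, hx, hy, hf⟩⟩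
  rintro ⟨u, hu, v, hv, huA, hvA, hf⟩
  simp only [mem_insert, mem_singleton] at hu hv
  rcases hu with rfl | rfl <;> rcases hv with rfl | rfl
  exacts [absurd rfl hf, ⟨huA, hvA, hf⟩, ⟨hvA, huA, hf.symm⟩, absurd rfl hf]

/-- Closed under the edges of `G_k \ colourPMC A f`; a vertex of `colourPMC A f` meeting `c`
borders the component of the vertices of colour `c`. -/
def MeetsColour (A : Finset (Fin k)) (f : Fin k → Fin 3) (c : Fin 3) : GkV k → Prop
  | .inl y => y ∈ A ∨ f y = c
  | .inr S => ∃ y ∈ S.1, y ∉ A ∧ f y = c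

lemma MeetsColour.of_adj {v w : GkV k} (hv : MeetsColour A f c v)
    (h : (restrict (Gk k) (colourPMC A f)).Adj v w) : MeetsColour A f c w := by
  obtain ⟨hadj, hvΩ, hwΩ⟩ := h
  cases v with
  | inl z =>
    cases w with
    | inl _ => exact hadj.elim
    | inr S => exact ⟨z, hadj, hvΩ, hv.resolve_left hvΩ⟩
  | inr S =>
    cases w with
    | inr _ => exact hadj.elim
    | inl z =>
      obtain ⟨y, hyS, hyA, rfl⟩ := hv
      exact .inr (by_contra fun hz => hvΩ ⟨y, hyS, z, hadj, hyA, hwΩ, Ne.symm hz⟩)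

lemma MeetsColour.of_reachable {v w : GkV k} (hv : MeetsColour A f c v)
    (h : (restrict (Gk k) (colourPMC A f)).Reachable v w) : MeetsColour A f c w := by
  obtain ⟨p⟩ := h
  induction p with
  | nil => exact hv
  | cons hadj _ ih => exact ih (hv.of_adj hadj)

lemma colour_eq_of_reachable (hy : y ∉ A)
    (h : (restrict (Gk k) (colourPMC A f)).Reachable (.inl x) (.inl y)) : f x = f y :=
  ((MeetsColour.of_reachable (v := .inl x) (Or.inr rfl) h).resolve_left hy).symm

lemma reachable_of_colour_eq (hx : x ∉ A) (hy : y ∉ A) (h : f x = f y) :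
    (restrict (Gk k) (colourPMC A f)).Reachable (.inl x) (.inl y) := by
  obtain rfl | hxy := eq_or_ne x y
  · rfl
  have hP : pair x y hxy ∉ colourPMC A f := by simp [pair_mem_colourPMC_iff, h]
  have h₁ : (restrict (Gk k) (colourPMC A f)).Adj (.inl x) (pair x y hxy) :=
    ⟨adj_inl_pair_left hxy, hx, hP⟩
  have h₂ : (restrict (Gk k) (colourPMC A f)).Adj (pair x y hxy) (.inl y) :=
    ⟨(adj_inl_pair_right hxy).symm, hP, hy⟩
  exact h₁.reachable.trans h₂.reachable

lemma exists_colour_of_isCompOf {C : Set (GkV k)} (hC : IsCompOf (Gk k) (colourPMC A f) C) :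
    ∃ c, ∀ w, (.inl w : GkV k) ∈ C → f w = c := by
  obtain ⟨a, -, rfl⟩ := hC
  by_cases h : ∃ z, (.inl z : GkV k) ∈
      {b | b ∉ colourPMC A f ∧ (restrict (Gk k) (colourPMC A f)).Reachable a b}
  · obtain ⟨z, -, hz⟩ := h
    exact ⟨f z, fun w ⟨hwA, hw⟩ => (colour_eq_of_reachable hwA (hz.symm.trans hw)).symm⟩
  · push Not at h
    exact ⟨0, fun w hw => (h w hw).elim⟩

lemma exists_pair_mem_colourPMC_avoiding (hf : ∀ c, ∃ x ∉ A, f x = c) (c : Fin 3) :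
    ∃ x y, ∃ h : x ≠ y, pair x y h ∈ colourPMC A f ∧ f x ≠ c ∧ f y ≠ c := by
  obtain ⟨c₁, c₂, h₁₂, h₁, h₂⟩ : ∃ c₁ c₂ : Fin 3, c₁ ≠ c₂ ∧ c₁ ≠ c ∧ c₂ ≠ c := by
    revert c; decide
  obtain ⟨x, hx, rfl⟩ := hf c₁
  obtain ⟨y, hy, rfl⟩ := hf c₂
  have hxy : x ≠ y := fun h => h₁₂ (congrArg f h)
  exact ⟨x, y, hxy, (pair_mem_colourPMC_iff hxy).2 ⟨hx, hy, h₁₂⟩, h₁, h₂⟩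

lemma nbhd_ne_colourPMC (hf : ∀ c, ∃ x ∉ A, f x = c) {C : Set (GkV k)}
    (hC : IsCompOf (Gk k) (colourPMC A f) C) : nbhd (Gk k) C ≠ colourPMC A f := by
  intro hN
  obtain ⟨c, hc⟩ := exists_colour_of_isCompOf hC
  obtain ⟨x, y, hxy, hP, hx, hy⟩ := exists_pair_mem_colourPMC_avoiding hf c
  obtain ⟨-, v, hv, hadj⟩ := hN ▸ hP
  cases v with
  | inr _ => exact hadj
  | inl z =>
    have : z = x ∨ z = y := by simpa [Gk, pair] using hadj
    rcases this with rfl | rfl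
    exacts [hx (hc _ hv), hy (hc _ hv)]

lemma mem_nbhd_of_meetsColour (hx : x ∉ A) {u : GkV k} (hu : u ∈ colourPMC A f)
    (hc : MeetsColour A f (f x) u) :
    u ∈ nbhd (Gk k)
      {b | b ∉ colourPMC A f ∧ (restrict (Gk k) (colourPMC A f)).Reachable (.inl x) b} := by
  refine ⟨fun h => h.1 hu, ?_⟩
  cases u with
  | inl a =>
    have hax : a ≠ x := fun h => hx (h ▸ hu)
    have hP : pair a x hax ∉ colourPMC A f := by
      simp only [pair_mem_colourPMC_iff]; exact fun h => h.1 hu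
    have hadj : (restrict (Gk k) (colourPMC A f)).Adj (.inl x) (pair a x hax) :=
      ⟨adj_inl_pair_right hax, hx, hP⟩
    exact ⟨pair a x hax, ⟨hP, hadj.reachable⟩, adj_inl_pair_left hax⟩
  | inr S =>
    obtain ⟨y, hyS, hyA, hy⟩ := hc
    exact ⟨.inl y, ⟨hyA, reachable_of_colour_eq hx hyA hy.symm⟩, hyS⟩

lemma exists_two_meetsColour {u : GkV k} (hu : u ∈ colourPMC A f) :
    ∃ c₁ c₂, c₁ ≠ c₂ ∧ MeetsColour A f c₁ u ∧ MeetsColour A f c₂ u := by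
  cases u with
  | inl a => exact ⟨0, 1, by decide, .inl hu, .inl hu⟩
  | inr S =>
    obtain ⟨x, hxS, y, hyS, hxA, hyA, hxy⟩ := hu
    exact ⟨f x, f y, hxy, ⟨x, hxS, hxA, rfl⟩, ⟨y, hyS, hyA, rfl⟩⟩

lemma exists_meetsColour_of_mem {u v : GkV k} (hu : u ∈ colourPMC A f)
    (hv : v ∈ colourPMC A f) : ∃ c, MeetsColour A f c u ∧ MeetsColour A f c v := by
  obtain ⟨a, b, hab, ha, hb⟩ := exists_two_meetsColour hu
  obtain ⟨c, d, hcd, hc, hd⟩ := exists_two_meetsColour hv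
  have key : ∀ a b c d : Fin 3, a ≠ b → c ≠ d → a = c ∨ a = d ∨ b = c ∨ b = d := by decide
  rcases key a b c d hab hcd with rfl | rfl | rfl | rfl
  exacts [⟨a, ha, hc⟩, ⟨a, ha, hd⟩, ⟨b, hb, hc⟩, ⟨b, hb, hd⟩]

theorem isPMC_colourPMC (hf : ∀ c, ∃ x ∉ A, f x = c) : IsPMC (Gk k) (colourPMC A f) := by
  refine ⟨fun C hC => nbhd_ne_colourPMC hf hC, fun u hu v hv _ => .inr ?_⟩
  obtain ⟨c, hcu, hcv⟩ := exists_meetsColour_of_mem hu hv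
  obtain ⟨x, hx, rfl⟩ := hf c
  exact ⟨_, ⟨.inl x, hx, rfl⟩, mem_nbhd_of_meetsColour hx hu hcu, mem_nbhd_of_meetsColour hx hv hcv⟩

lemma colour_eq_of_colourPMC_eq (h : colourPMC A f = colourPMC A g) (hx : x ∉ A) (hy : y ∉ A)
    (hf : f x = f y) : g x = g y := by
  obtain rfl | hxy := eq_or_ne x y
  · rfl
  have hP : pair x y hxy ∉ colourPMC A g := by
    rw [← h, pair_mem_colourPMC_iff]; exact fun h' => h'.2.2 hf
  by_contra hg
  exact hP ((pair_mem_colourPMC_iff hxy).2 ⟨hx, hy, hg⟩)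

/-- Every partition of `[k] \ A` into three classes separating the `e c` is the colour partition
of exactly one of these colourings. -/
def normalColourings (A : Finset (Fin k)) (e : Fin 3 ↪ Fin k) : Finset (Fin k → Fin 3) :=
  {f | (∀ a ∈ A, f a = 0) ∧ ∀ c, f (e c) = c}

variable {e : Fin 3 ↪ Fin k}

lemma injOn_colourPMC (he : ∀ c, e c ∉ A) :
    Set.InjOn (colourPMC A) (normalColourings A e) := by
  intro f hf g hg h
  simp only [normalColourings, coe_filter, mem_univ, true_and, Set.mem_ofPred_eq] at hf hg
  funext x
  by_cases hx : x ∈ A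
  · rw [hf.1 x hx, hg.1 x hx]
  · rw [colour_eq_of_colourPMC_eq h hx (he (f x)) (hf.2 (f x)).symm, hg.2]

lemma card_normalColourings (he : ∀ c, e c ∉ A) :
    #(normalColourings A e) = 3 ^ (k - #A - 3) := by
  let g₀ : Fin k → Fin 3 := Function.extend e id 0
  have hg₀A : ∀ a ∈ A, g₀ a = 0 := fun a ha =>
    Function.extend_apply' _ _ _ fun ⟨c, hc⟩ => he c (hc ▸ ha)
  have hg₀e : ∀ c, g₀ (e c) = c := e.injective.extend_apply _ _
  have hdisj : Disjoint A (univ.map e) := by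
    simp only [disjoint_left, mem_map, mem_univ, true_and]
    rintro a ha ⟨c, rfl⟩
    exact he c ha
  have : normalColourings A e =
      ({f | ∀ x ∈ A ∪ univ.map e, f x = g₀ x} : Finset (Fin k → Fin 3)) := by
    ext f
    simp only [normalColourings, mem_filter, mem_univ, true_and, mem_union, mem_map, or_imp,
      forall_and, forall_exists_index, forall_apply_eq_imp_iff, hg₀e]
    exact and_congr_left fun _ => forall₂_congr fun a ha => by rw [hg₀A a ha]
  rw [this, card_filter_forall_mem_eq, card_union_of_disjoint hdisj, card_map, card_univ,
    Fintype.card_fin, Fintype.card_fin, Nat.sub_sub]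

theorem pow_le_ncard_isPMC_inl_preimage_eq (A : Finset (Fin k)) (hA : #A + 3 ≤ k) :
    3 ^ (k - #A - 3) ≤ {Ω : Set (GkV k) | IsPMC (Gk k) Ω ∧ Sum.inl ⁻¹' Ω = A}.ncard := by
  obtain ⟨T, hTA, hT⟩ := exists_subset_card_eq (s := Aᶜ) (n := 3)
    (by rw [card_compl, Fintype.card_fin]; omega)
  let e : Fin 3 ↪ Fin k := (T.orderEmbOfFin hT).toEmbedding
  have he : ∀ c, e c ∉ A := fun c => mem_compl.1 (hTA (T.orderEmbOfFin_mem hT c))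
  rw [← card_normalColourings he, ← Set.ncard_coe_finset]
  refine Set.ncard_le_ncard_of_injOn _ (fun f hf => ⟨isPMC_colourPMC fun c => ⟨e c, he c, ?_⟩, rfl⟩)
    (injOn_colourPMC he) (Set.toFinite _)
  simp only [normalColourings, coe_filter, mem_univ, true_and, Set.mem_ofPred_eq] at hf
  exact hf.2 c

theorem sum_choose_mul_pow_le_ncard_isPMC (k : ℕ) :
    ∑ i ∈ range (k - 2), k.choose i * 3 ^ (k - i) ≤
      27 * {Ω : Set (GkV k) | IsPMC (Gk k) Ω}.ncard := by
  classical
  let P : Finset (Set (GkV k)) := {Ω | IsPMC (Gk k) Ω}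
  let trace (Ω : Set (GkV k)) : Finset (Fin k) := {a | .inl a ∈ Ω}
  have hfiber (A : Finset (Fin k)) :
      {Ω : Set (GkV k) | IsPMC (Gk k) Ω ∧ Sum.inl ⁻¹' Ω = A}.ncard = #{Ω ∈ P | trace Ω = A} := by
    rw [← Set.ncard_coe_finset]
    congr
    ext Ω
    simp [P, trace, Set.ext_iff, Finset.ext_iff, and_comm]
  calc ∑ i ∈ range (k - 2), k.choose i * 3 ^ (k - i)
      = 27 * ∑ i ∈ range (k - 2), ∑ A ∈ powersetCard i (univ : Finset (Fin k)),
          3 ^ (k - #A - 3) := by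
        rw [mul_sum]
        refine sum_congr rfl fun i hi => ?_
        obtain ⟨m, hm⟩ : ∃ m, k - i = m + 3 := ⟨k - i - 3, by have := mem_range.1 hi; omega⟩
        rw [sum_congr rfl fun A hA => by rw [(mem_powersetCard.1 hA).2, hm, Nat.add_sub_cancel],
          sum_const, card_powersetCard, card_univ, Fintype.card_fin, smul_eq_mul, hm, pow_add]
        ring
    _ ≤ 27 * ∑ i ∈ range (k - 2), ∑ A ∈ powersetCard i univ, #{Ω ∈ P | trace Ω = A} := by
        gcongr with i hi A hA
        rw [← hfiber]
        have := mem_range.1 hi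
        exact pow_le_ncard_isPMC_inl_preimage_eq A (by rw [(mem_powersetCard.1 hA).2]; omega)
    _ = 27 * ∑ i ∈ range (k - 2), #{Ω ∈ P | #(trace Ω) = i} := by
        congr 1
        refine sum_congr rfl fun i _ => ?_
        rw [sum_card_fiberwise_eq_card_filter]
        simp [mem_powersetCard]
    _ = 27 * #{Ω ∈ P | #(trace Ω) ∈ range (k - 2)} := by
        rw [sum_card_fiberwise_eq_card_filter]
    _ ≤ 27 * #P := by
        gcongr
        exact filter_subset _ _
    _ = 27 * {Ω : Set (GkV k) | IsPMC (Gk k) Ω}.ncard := by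
        rw [← Set.ncard_coe_finset]
        simp [P]

end Gk

lemma four_pow_le_two_mul_sum_choose_mul_pow {k : ℕ} (hk : 5 ≤ k) :
    4 ^ k ≤ 2 * ∑ i ∈ range (k - 2), k.choose i * 3 ^ (k - i) := by
  obtain ⟨m, rfl⟩ : ∃ m, k = m + 5 := ⟨k - 5, by omega⟩
  set t : ℕ → ℕ := fun i => (m + 5).choose i * 3 ^ (m + 5 - i)
  have hbinom : ∑ i ∈ range (m + 5 + 1), t i = 4 ^ (m + 5) := by
    simpa [t, mul_comm] using (add_pow (1 : ℕ) 3 (m + 5)).symm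
  have hsymm (i j : ℕ) (hij : i + j = m + 5) (hj : j ≤ 2) : t i ≤ t j := by
    simp only [t, Nat.choose_symm_of_eq_add hij.symm, show m + 5 - i = j by omega]
    gcongr <;> omega
  have hhead : t 0 + t 1 + t 2 ≤ ∑ i ∈ range (m + 3), t i := by
    calc t 0 + t 1 + t 2 = ∑ i ∈ range 3, t i := by simp [sum_range_succ]
      _ ≤ ∑ i ∈ range (m + 3), t i := sum_le_sum_of_subset (range_subset_range.2 (by omega))
  rw [sum_range_succ, sum_range_succ, sum_range_succ] at hbinom
  have := hsymm (m + 3) 2 (by omega) le_rfl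
  have := hsymm (m + 4) 1 (by omega) (by norm_num)
  have := hsymm (m + 5) 0 rfl (by norm_num)
  show 4 ^ (m + 5) ≤ 2 * ∑ i ∈ range (m + 3), t i
  omega

theorem stmt10 :
    (∀ k : ℕ, ∑ i ∈ Finset.range (k - 2), Nat.choose k i * 3 ^ (k - i) ≤
      27 * {Ω : Set (GkV k) | IsPMC (Gk k) Ω}.ncard) ∧
    ∃ c : ℝ, 0 < c ∧ ∃ N : ℕ, ∀ k ≥ N,
      c * 4 ^ k ≤ ({Ω : Set (GkV k) | IsPMC (Gk k) Ω}.ncard : ℝ) := by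
  refine ⟨Gk.sum_choose_mul_pow_le_ncard_isPMC, 1 / 54, by norm_num, 5, fun k hk => ?_⟩
  have h : 4 ^ k ≤ 54 * {Ω : Set (GkV k) | IsPMC (Gk k) Ω}.ncard := by
    have := Gk.sum_choose_mul_pow_le_ncard_isPMC k
    have := four_pow_le_two_mul_sum_choose_mul_pow hk
    omega
  have h' : (4 : ℝ) ^ k ≤ 54 * ({Ω : Set (GkV k) | IsPMC (Gk k) Ω}.ncard : ℝ) := by
    exact_mod_cast h
  linarith
end
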